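/- arXiv:1710.05763 — 2 statements merged into one kernel-verified Lean document; each statement's English description precedes it below -/
import Mathlib

section
/- Let X ~ Uni(0,2), Z ~ Uni(0,2), and Y ~ Uni(0,1) be independent random variables. For every Lebesgue-measurable set A ⊆ [0,2], P( (Z ∈ A and max(X − Z, 0) < Y) or (Z ∉ A and Y < max(X − Z, 0)) ) ≤ 37/48. -/
/-!
Conditioning on `Z = z`, going to `ℓ₄` wins with probability
`q z = P(Y < max (X - z) 0) = ½ ∫₀² min (max (x - z) 0) 1 dx` and going to `ℓ₃` with probability
`1 - q z`. Whatever `A` is, the winning probability is therefore at most the average over `z` of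
`max (1 - q z) (q z)`. Since `q z = 3/4 - z/2` on `[0, 1]` and `q z = (2 - z)² / 4` on `[1, 2]`,
that average is `37/48`.
-/

open MeasureTheory Set

/-- The uniform probability measure on the real interval `[a, b]`:
normalized Lebesgue measure restricted to `Icc a b`. -/
noncomputable def unif (a b : ℝ) : Measure ℝ :=
  (volume (Set.Icc a b))⁻¹ • volume.restrict (Set.Icc a b)

instance (a b : ℝ) : SFinite (unif a b) := by unfold unif; infer_instance

theorem MeasureTheory.Measure.prod_prod_apply_eq_lintegral_lintegral {α β γ : Type*} [MeasurableSpace α]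
    [MeasurableSpace β] [MeasurableSpace γ] (μ : Measure α) (ν : Measure β) (ρ : Measure γ)
    [SFinite μ] [SFinite ν] [SFinite ρ] {S : Set (α × β × γ)} (hS : MeasurableSet S) :
    μ.prod (ν.prod ρ) S = ∫⁻ z, ∫⁻ x, ρ {y | (x, z, y) ∈ S} ∂μ ∂ν := by
  have hslice (x : α) : ν.prod ρ (Prod.mk x ⁻¹' S) = ∫⁻ z, ρ {y | (x, z, y) ∈ S} ∂ν :=
    Measure.prod_apply (measurable_prodMk_left hS)
  rw [Measure.prod_apply hS, lintegral_congr hslice, lintegral_lintegral_swap]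
  exact (measurable_measure_prodMk_left
    (MeasurableEquiv.prodAssoc.measurable hS)).aemeasurable

theorem lintegral_unif_ofReal {a b : ℝ} (hab : a < b) {f : ℝ → ℝ}
    (hf : IntervalIntegrable f volume a b) (hf0 : ∀ x, 0 ≤ f x) :
    ∫⁻ x, ENNReal.ofReal (f x) ∂unif a b = ENNReal.ofReal ((∫ x in a..b, f x) / (b - a)) := by
  rw [unif, ← Measure.restrict_congr_set Ioc_ae_eq_Icc, lintegral_smul_measure,
    ← ofReal_integral_eq_lintegral_ofReal
      ((intervalIntegrable_iff_integrableOn_Ioc_of_le hab.le).1 hf)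
      (Filter.Eventually.of_forall hf0), ← intervalIntegral.integral_of_le hab.le,
    Real.volume_Icc, div_eq_mul_inv, ENNReal.ofReal_mul' (inv_nonneg.2 (sub_pos.2 hab).le),
    ENNReal.ofReal_inv_of_pos (sub_pos.2 hab), smul_eq_mul, mul_comm]

theorem unif_zero_one_Iio (m : ℝ) : unif 0 1 (Iio m) = ENNReal.ofReal (min m 1) := by
  rw [unif, ← Measure.restrict_congr_set Ioo_ae_eq_Icc]
  simp [Real.volume_Icc, Measure.restrict_apply measurableSet_Iio, Iio_inter_Ioo]

theorem unif_zero_one_Ioi {m : ℝ} (hm : 0 ≤ m) :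
    unif 0 1 (Ioi m) = ENNReal.ofReal (1 - min m 1) := by
  rw [unif, ← Measure.restrict_congr_set Ioo_ae_eq_Icc]
  simp only [Real.volume_Icc, sub_zero, ENNReal.ofReal_one, inv_one, one_smul,
    Measure.restrict_apply measurableSet_Ioi, Ioi_inter_Ioo, Real.volume_Ioo, max_eq_left hm]
  rcases le_total m 1 with h | h
  · rw [min_eq_left h]
  · rw [min_eq_right h, sub_self, ENNReal.ofReal_zero, ENNReal.ofReal_of_nonpos (sub_nonpos.2 h)]

theorem integral_clamp_of_nonpos {a b : ℝ} (ha : a ≤ 0) (hb : b ≤ 0) :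
    ∫ t in a..b, min (max t 0) 1 = 0 := by
  rw [intervalIntegral.integral_congr (g := fun _ => 0), intervalIntegral.integral_zero]
  intro t ht
  simp [ht.2.trans (max_le ha hb)]

theorem integral_zero_clamp_of_le_one {u : ℝ} (hu0 : 0 ≤ u) (hu1 : u ≤ 1) :
    ∫ t in (0:ℝ)..u, min (max t 0) 1 = u ^ 2 / 2 := by
  rw [intervalIntegral.integral_congr (g := fun t => t), integral_id]
  · ring
  intro t ht
  rw [uIcc_of_le hu0] at ht
  simp [ht.1, ht.2.trans hu1]

theorem integral_clamp_of_one_le {a b : ℝ} (ha : 1 ≤ a) (hb : 1 ≤ b) :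
    ∫ t in a..b, min (max t 0) 1 = b - a := by
  rw [intervalIntegral.integral_congr (g := fun _ => 1), intervalIntegral.integral_const,
    smul_eq_mul, mul_one]
  intro t ht
  have ht1 : 1 ≤ t := (le_min ha hb).trans ht.1
  simp [ht1, zero_le_one.trans ht1]

theorem intervalIntegrable_clamp (a b : ℝ) :
    IntervalIntegrable (fun t : ℝ => min (max t 0) 1) volume a b :=
  (by fun_prop : Continuous fun t : ℝ => min (max t 0) 1).intervalIntegrable a b

/-- `P(Y < max (X - z) 0)` for `X ~ Uni(0,2)`, `Y ~ Uni(0,1)`: the chance of winning at `ℓ₄`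
after entering `ℓ₂` at time `z`. -/
noncomputable def probLtResidual (z : ℝ) : ℝ :=
  (∫ x in (0:ℝ)..2, min (max (x - z) 0) 1) / 2

theorem probLtResidual_eq (z : ℝ) :
    probLtResidual z = (∫ t in -z..2 - z, min (max t 0) 1) / 2 := by
  rw [probLtResidual, intervalIntegral.integral_comp_sub_right (fun t => min (max t 0) 1),
    zero_sub]

theorem probLtResidual_of_le_one {z : ℝ} (hz0 : 0 ≤ z) (hz1 : z ≤ 1) :
    probLtResidual z = 3 / 4 - z / 2 := by
  rw [probLtResidual_eq,
    ← intervalIntegral.integral_add_adjacent_intervals (b := 0) (intervalIntegrable_clamp _ _)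
      (intervalIntegrable_clamp _ _),
    ← intervalIntegral.integral_add_adjacent_intervals (a := 0) (b := 1)
      (intervalIntegrable_clamp _ _) (intervalIntegrable_clamp _ _),
    integral_clamp_of_nonpos (by linarith) le_rfl, integral_zero_clamp_of_le_one zero_le_one le_rfl,
    integral_clamp_of_one_le le_rfl (by linarith)]
  ring

theorem probLtResidual_of_one_le {z : ℝ} (hz1 : 1 ≤ z) (hz2 : z ≤ 2) :
    probLtResidual z = (2 - z) ^ 2 / 4 := by
  rw [probLtResidual_eq,
    ← intervalIntegral.integral_add_adjacent_intervals (b := 0) (intervalIntegrable_clamp _ _)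
      (intervalIntegrable_clamp _ _),
    integral_clamp_of_nonpos (by linarith) le_rfl,
    integral_zero_clamp_of_le_one (by linarith) (by linarith), zero_add]
  ring

theorem continuous_probLtResidual : Continuous probLtResidual :=
  (intervalIntegral.continuous_parametric_intervalIntegral_of_continuous'
    (by fun_prop : Continuous fun p : ℝ × ℝ => min (max (p.2 - p.1) 0) 1) 0 2).div_const 2

noncomputable def bestWinProb (z : ℝ) : ℝ := max (1 - probLtResidual z) (probLtResidual z)

theorem bestWinProb_nonneg (z : ℝ) : 0 ≤ bestWinProb z := by
  unfold bestWinProb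
  linarith [le_max_left (1 - probLtResidual z) (probLtResidual z),
    le_max_right (1 - probLtResidual z) (probLtResidual z)]

theorem continuous_bestWinProb : Continuous bestWinProb :=
  (continuous_const.sub continuous_probLtResidual).max continuous_probLtResidual

theorem integral_bestWinProb : ∫ z in (0:ℝ)..2, bestWinProb z = 37 / 24 := by
  have hint (a b : ℝ) : IntervalIntegrable bestWinProb volume a b :=
    continuous_bestWinProb.intervalIntegrable a b
  -- `probLtResidual` crosses `1/2` at `z = 1/2` and changes formula at `z = 1`
  rw [← intervalIntegral.integral_add_adjacent_intervals (b := 1) (hint _ _) (hint _ _),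
    ← intervalIntegral.integral_add_adjacent_intervals (b := 1 / 2) (hint _ _) (hint _ _),
    intervalIntegral.integral_congr (g := fun z => 3 / 4 - z / 2) (a := 0) (b := 1 / 2),
    intervalIntegral.integral_congr (g := fun z => 1 / 4 + z / 2) (a := 1 / 2) (b := 1),
    intervalIntegral.integral_congr (g := fun z => 1 - (2 - z) ^ 2 / 4) (a := 1) (b := 2),
    intervalIntegral.integral_comp_sub_left (fun u => 1 - u ^ 2 / 4)]
  · norm_num
  all_goals
    intro z hz
    rw [uIcc_of_le (by norm_num)] at hz
    obtain ⟨hz₁, hz₂⟩ := hz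
    dsimp only [bestWinProb]
  · rw [probLtResidual_of_one_le hz₁ hz₂, max_eq_left (by nlinarith)]
  · rw [probLtResidual_of_le_one (by linarith) hz₂, max_eq_left (by linarith)]
    ring
  · rw [probLtResidual_of_le_one hz₁ (by linarith), max_eq_right (by linarith)]

def schedulerWins (A : Set ℝ) : Set (ℝ × ℝ × ℝ) :=
  {p | (p.2.1 ∈ A ∧ max (p.1 - p.2.1) 0 < p.2.2) ∨ (p.2.1 ∉ A ∧ p.2.2 < max (p.1 - p.2.1) 0)}

theorem measurableSet_schedulerWins {A : Set ℝ} (hA : MeasurableSet A) :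
    MeasurableSet (schedulerWins A) := by
  have hres : Measurable fun p : ℝ × ℝ × ℝ => max (p.1 - p.2.1) 0 := by fun_prop
  have hZ : MeasurableSet {p : ℝ × ℝ × ℝ | p.2.1 ∈ A} := measurable_snd.fst hA
  exact (hZ.inter (measurableSet_lt hres (by fun_prop))).union
    (hZ.compl.inter (measurableSet_lt (by fun_prop) hres))

theorem setOf_mem_schedulerWins_of_mem {A : Set ℝ} {z : ℝ} (hz : z ∈ A) (x : ℝ) :
    {y | (x, z, y) ∈ schedulerWins A} = Ioi (max (x - z) 0) := by
  ext y; simp [schedulerWins, hz]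

theorem setOf_mem_schedulerWins_of_notMem {A : Set ℝ} {z : ℝ} (hz : z ∉ A) (x : ℝ) :
    {y | (x, z, y) ∈ schedulerWins A} = Iio (max (x - z) 0) := by
  ext y; simp [schedulerWins, hz]

theorem lintegral_unif_Iio_residual (z : ℝ) :
    ∫⁻ x, unif 0 1 (Iio (max (x - z) 0)) ∂unif 0 2 = ENNReal.ofReal (probLtResidual z) := by
  simp_rw [unif_zero_one_Iio]
  rw [lintegral_unif_ofReal two_pos (Continuous.intervalIntegrable (by fun_prop) _ _)
    (fun x => le_min (le_max_right _ _) zero_le_one), sub_zero, probLtResidual]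

theorem lintegral_unif_Ioi_residual (z : ℝ) :
    ∫⁻ x, unif 0 1 (Ioi (max (x - z) 0)) ∂unif 0 2 = ENNReal.ofReal (1 - probLtResidual z) := by
  simp_rw [unif_zero_one_Ioi (le_max_right _ 0)]
  rw [lintegral_unif_ofReal two_pos (Continuous.intervalIntegrable (by fun_prop) _ _)
    (fun x => sub_nonneg.2 (min_le_right _ _)), intervalIntegral.integral_sub
    intervalIntegrable_const (Continuous.intervalIntegrable (by fun_prop) _ _),
    intervalIntegral.integral_const, probLtResidual]
  congr 1
  ring

theorem lintegral_unif_setOf_mem_schedulerWins_le (A : Set ℝ) (z : ℝ) :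
    ∫⁻ x, unif 0 1 {y | (x, z, y) ∈ schedulerWins A} ∂unif 0 2
      ≤ ENNReal.ofReal (bestWinProb z) := by
  by_cases hz : z ∈ A
  · simp_rw [setOf_mem_schedulerWins_of_mem hz, lintegral_unif_Ioi_residual]
    exact ENNReal.ofReal_le_ofReal (le_max_left _ _)
  · simp_rw [setOf_mem_schedulerWins_of_notMem hz, lintegral_unif_Iio_residual]
    exact ENNReal.ofReal_le_ofReal (le_max_right _ _)

theorem stmt_6_general (A : Set ℝ) (hA : MeasurableSet A) :
    ((unif 0 2).prod ((unif 0 2).prod (unif 0 1)))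
        {p : ℝ × ℝ × ℝ |
          (p.2.1 ∈ A ∧ max (p.1 - p.2.1) 0 < p.2.2) ∨
          (p.2.1 ∉ A ∧ p.2.2 < max (p.1 - p.2.1) 0)} ≤ 37/48 := by
  calc ((unif 0 2).prod ((unif 0 2).prod (unif 0 1))) (schedulerWins A)
      = ∫⁻ z, ∫⁻ x, unif 0 1 {y | (x, z, y) ∈ schedulerWins A} ∂unif 0 2 ∂unif 0 2 :=
        Measure.prod_prod_apply_eq_lintegral_lintegral _ _ _ (measurableSet_schedulerWins hA)
    _ ≤ ∫⁻ z, ENNReal.ofReal (bestWinProb z) ∂unif 0 2 :=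
        lintegral_mono (lintegral_unif_setOf_mem_schedulerWins_le A)
    _ = ENNReal.ofReal (37 / 48) := by
        rw [lintegral_unif_ofReal two_pos (continuous_bestWinProb.intervalIntegrable _ _)
          bestWinProb_nonneg, integral_bestWinProb]
        norm_num
    _ = 37 / 48 := by
        rw [ENNReal.ofReal_div_of_pos (by norm_num)]
        norm_num

/-- Let `X ~ Uni(0,2)`, `Z ~ Uni(0,2)`, `Y ~ Uni(0,1)` be independent (modelled by the
product measure, with `p = (x, z, y)`).  For every Lebesgue-measurable set `A ⊆ [0,2]`,
`P((Z ∈ A ∧ max (X - Z) 0 < Y) ∨ (Z ∉ A ∧ Y < max (X - Z) 0)) ≤ 37/48`. -/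
theorem stmt_6 (A : Set ℝ) (hA : MeasurableSet A) (hA' : A ⊆ Set.Icc 0 2) :
    ((unif 0 2).prod ((unif 0 2).prod (unif 0 1)))
        {p : ℝ × ℝ × ℝ |
          (p.2.1 ∈ A ∧ max (p.1 - p.2.1) 0 < p.2.2) ∨
          (p.2.1 ∉ A ∧ p.2.2 < max (p.1 - p.2.1) 0)} ≤ 37/48 :=
  stmt_6_general A hA
end

section
/- Let X ~ Uni(0,2), Z ~ Uni(0,2), and Y ~ Uni(0,1) be independent random variables. For every Lebesgue-measurable set B ⊆ [0,2]×[0,1], P( ((X,Y) ∈ B and max(X − Z, 0) < Y) or ((X,Y) ∉ B and Y < max(X − Z, 0)) ) < 1. -/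
/-!
Restrict to `(X, Y) ∈ [1, 3/2] × [1/4, 1/2]`. There `Z ≤ 1/2` forces `max (X - Z) 0 ≥ 1/2 ≥ Y`,
so going to `ℓ₃` loses, while `Z ≥ 3/2` forces `max (X - Z) 0 = 0 < Y`, so going to `ℓ₄` loses.
As `Z` is independent of `(X, Y)` and equally likely to lie in `[0, 1/2]` and in `[3/2, 2]`,
whatever `B` decides on this rectangle the scheduler loses with probability at least
`P(Z ≤ 1/2) · P((X, Y) ∈ [1, 3/2] × [1/4, 1/2]) > 0`.
-/

open MeasureTheory Set

lemma isProbabilityMeasure_unif {a b : ℝ} (hab : a < b) : IsProbabilityMeasure (unif a b) := by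
  constructor
  rw [unif, Measure.smul_apply, Measure.restrict_apply_univ, smul_eq_mul]
  exact ENNReal.inv_mul_cancel (by simpa [Real.volume_Icc] using hab) (by simp [Real.volume_Icc])

lemma unif_Icc_of_le {a b c d : ℝ} (hac : a ≤ c) (hdb : d ≤ b) :
    unif a b (Icc c d) = (ENNReal.ofReal (b - a))⁻¹ * ENNReal.ofReal (d - c) := by
  rw [unif, Measure.smul_apply, Measure.restrict_apply measurableSet_Icc,
    inter_eq_left.2 (Icc_subset_Icc hac hdb), Real.volume_Icc, Real.volume_Icc, smul_eq_mul]

lemma unif_Icc_pos {a b c d : ℝ} (hac : a ≤ c) (hcd : c < d) (hdb : d ≤ b) :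
    0 < unif a b (Icc c d) := by
  rw [unif_Icc_of_le hac hdb]
  exact ENNReal.mul_pos (ENNReal.inv_ne_zero.2 ENNReal.ofReal_ne_top)
    (ENNReal.ofReal_pos.2 (sub_pos.2 hcd)).ne'

section FiberSet

variable {α β γ : Type*}

def fiberSet (S : Set (α × γ)) (I : Set β) : Set (α × β × γ) :=
  {p | (p.1, p.2.2) ∈ S ∧ p.2.1 ∈ I}

lemma disjoint_fiberSet_of_disjoint_right (S T : Set (α × γ)) {I J : Set β}
    (hIJ : Disjoint I J) : Disjoint (fiberSet S I) (fiberSet T J) :=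
  disjoint_left.2 fun _ hI hJ => hIJ.notMem_of_mem_left hI.2 hJ.2

variable [MeasurableSpace α] [MeasurableSpace β] [MeasurableSpace γ]

lemma measurableSet_fiberSet {S : Set (α × γ)} (hS : MeasurableSet S) {I : Set β}
    (hI : MeasurableSet I) : MeasurableSet (fiberSet S I) :=
  ((measurable_fst.prodMk measurable_snd.snd) hS).inter (measurable_snd.fst hI)

lemma prod_prod_fiberSet (μ : Measure α) (ν : Measure β) (ρ : Measure γ) [SFinite ν]
    [SFinite ρ] {S : Set (α × γ)} (hS : MeasurableSet S) {I : Set β} (hI : MeasurableSet I) :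
    μ.prod (ν.prod ρ) (fiberSet S I) = ν I * μ.prod ρ S := by
  have hsection (x : α) : Prod.mk x ⁻¹' fiberSet S I = I ×ˢ (Prod.mk x ⁻¹' S) := by
    ext; simp only [fiberSet, mem_preimage, mem_ofPred_eq, mem_prod]; tauto
  rw [Measure.prod_apply (measurableSet_fiberSet hS hI), Measure.prod_apply hS]
  simp_rw [hsection, Measure.prod_prod]
  exact lintegral_const_mul _ (measurable_measure_prodMk_left hS)

end FiberSet

def winningEvent (B : Set (ℝ × ℝ)) : Set (ℝ × ℝ × ℝ) :=
  {p | ((p.1, p.2.2) ∈ B ∧ max (p.1 - p.2.1) 0 < p.2.2) ∨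
    ((p.1, p.2.2) ∉ B ∧ p.2.2 < max (p.1 - p.2.1) 0)}

def criticalRect : Set (ℝ × ℝ) := Icc 1 (3 / 2) ×ˢ Icc (1 / 4) (1 / 2)

lemma measurableSet_criticalRect : MeasurableSet criticalRect :=
  measurableSet_Icc.prod measurableSet_Icc

def losingSet (B : Set (ℝ × ℝ)) : Set (ℝ × ℝ × ℝ) :=
  fiberSet (criticalRect ∩ B) (Icc 0 (1 / 2)) ∪ fiberSet (criticalRect \ B) (Icc (3 / 2) 2)

lemma measurableSet_losingSet {B : Set (ℝ × ℝ)} (hB : MeasurableSet B) :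
    MeasurableSet (losingSet B) :=
  (measurableSet_fiberSet (measurableSet_criticalRect.inter hB) measurableSet_Icc).union
    (measurableSet_fiberSet (measurableSet_criticalRect.diff hB) measurableSet_Icc)

lemma disjoint_winningEvent_losingSet (B : Set (ℝ × ℝ)) :
    Disjoint (winningEvent B) (losingSet B) := by
  refine disjoint_left.2 ?_
  rintro ⟨x, z, y⟩ (hwin | hwin)
    (⟨⟨⟨⟨hx, -⟩, -, hy⟩, hB⟩, -, hz⟩ | ⟨⟨⟨⟨-, hx⟩, hy, -⟩, hB⟩, hz, -⟩)
  · exact absurd hwin.2 (not_lt.2 ((by linarith : y ≤ x - z).trans (le_max_left _ _)))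
  · exact hB hwin.1
  · exact hwin.1 hB
  · rw [max_eq_right (by linarith)] at hwin
    linarith [hwin.2]

lemma measure_losingSet {B : Set (ℝ × ℝ)} (hB : MeasurableSet B) :
    ((unif 0 2).prod ((unif 0 2).prod (unif 0 1))) (losingSet B) =
      unif 0 2 (Icc 0 (1 / 2)) * (unif 0 2).prod (unif 0 1) criticalRect := by
  have hZ : unif 0 2 (Icc 0 (1 / 2)) = unif 0 2 (Icc (3 / 2) 2) := by
    rw [unif_Icc_of_le le_rfl (by norm_num), unif_Icc_of_le (by norm_num) le_rfl]
    norm_num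
  have hdisj : Disjoint (Icc (0 : ℝ) (1 / 2)) (Icc (3 / 2) 2) :=
    disjoint_left.2 fun z h₁ h₂ => by linarith [h₁.2, h₂.1]
  have hinter := measurableSet_criticalRect.inter hB
  have hdiff := measurableSet_criticalRect.diff hB
  rw [losingSet, measure_union (disjoint_fiberSet_of_disjoint_right _ _ hdisj)
      (measurableSet_fiberSet hdiff measurableSet_Icc),
    prod_prod_fiberSet _ _ _ hinter measurableSet_Icc,
    prod_prod_fiberSet _ _ _ hdiff measurableSet_Icc, ← hZ, ← mul_add,
    measure_inter_add_sdiff _ hB]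

lemma measure_losingSet_pos {B : Set (ℝ × ℝ)} (hB : MeasurableSet B) :
    0 < ((unif 0 2).prod ((unif 0 2).prod (unif 0 1))) (losingSet B) := by
  rw [measure_losingSet hB, criticalRect, Measure.prod_prod]
  exact ENNReal.mul_pos (unif_Icc_pos le_rfl (by norm_num) (by norm_num)).ne'
    (ENNReal.mul_pos (unif_Icc_pos (by norm_num) (by norm_num) (by norm_num)).ne'
      (unif_Icc_pos (by norm_num) (by norm_num) (by norm_num)).ne').ne'

theorem stmt_7_general (B : Set (ℝ × ℝ)) (hB : MeasurableSet B) :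
    ((unif 0 2).prod ((unif 0 2).prod (unif 0 1)))
        {p : ℝ × ℝ × ℝ |
          ((p.1, p.2.2) ∈ B ∧ max (p.1 - p.2.1) 0 < p.2.2) ∨
          ((p.1, p.2.2) ∉ B ∧ p.2.2 < max (p.1 - p.2.1) 0)} < 1 := by
  have := isProbabilityMeasure_unif (a := 0) (b := 2) (by norm_num)
  have := isProbabilityMeasure_unif (a := 0) (b := 1) (by norm_num)
  calc _ ≤ ((unif 0 2).prod ((unif 0 2).prod (unif 0 1))) (losingSet B)ᶜ :=
        measure_mono (disjoint_winningEvent_losingSet B).subset_compl_right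
    _ = 1 - ((unif 0 2).prod ((unif 0 2).prod (unif 0 1))) (losingSet B) :=
        prob_compl_eq_one_sub (measurableSet_losingSet hB)
    _ < 1 := ENNReal.sub_lt_self ENNReal.one_ne_top one_ne_zero (measure_losingSet_pos hB).ne'

/-- Let `X ~ Uni(0,2)`, `Z ~ Uni(0,2)`, `Y ~ Uni(0,1)` be independent (modelled by the
product measure, with `p = (x, z, y)`).  For every Lebesgue-measurable set
`B ⊆ [0,2] × [0,1]`,
`P(((X,Y) ∈ B ∧ max (X - Z) 0 < Y) ∨ ((X,Y) ∉ B ∧ Y < max (X - Z) 0)) < 1`. -/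
theorem stmt_7 (B : Set (ℝ × ℝ)) (hB : MeasurableSet B)
    (hB' : B ⊆ Set.Icc (0:ℝ) 2 ×ˢ Set.Icc (0:ℝ) 1) :
    ((unif 0 2).prod ((unif 0 2).prod (unif 0 1)))
        {p : ℝ × ℝ × ℝ |
          ((p.1, p.2.2) ∈ B ∧ max (p.1 - p.2.1) 0 < p.2.2) ∨
          ((p.1, p.2.2) ∉ B ∧ p.2.2 < max (p.1 - p.2.1) 0)} < 1 :=
  stmt_7_general B hB
end
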